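/- arXiv:2507.19111 — 4 statements merged into one kernel-verified Lean document; each statement's English description precedes it below -/
import Mathlib

section
/- Consider the convex optimization problem: minimize ϑ over a measurable power policy p(t) ≥ 0 and ϑ, subject to ∫_{t_k}^{t_{k+1}} E[B log₂(1 + p(t)h(t)/δ²)] dt ≥ S and p(t)·M(t) ≤ ϑ for all t, where M(t) = max_{j∈N} h_{m,j}(t) > 0 is deterministic (or treated pointwise). Then the optimal policy is p*(t) = ϑ*/M(t), where ϑ* is the unique solution of ∫_{t_k}^{t_{k+1}} E[B log₂(1 + ϑ·h(t)/(M(t)δ²))] dt = S. -/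
/-!
Suppose a feasible pair `(p, ϑ)` had `ϑ < ϑ*`. Then `p t < ϑ*/M t` on `[t_k, t_{k+1})`, so at
every time the expected rate of `p` is strictly below that of the full-power policy, unless the
latter expectation is the junk value `0` of a non-integrable integral. The second alternative is
closed by Bernoulli's inequality: `log (1 + b x) ≤ (b / a) * log (1 + a x)` for `0 < a ≤ b`, so
integrability of the rate at the lower power forces it at the higher one and both integrals
vanish together. The relation "strictly below, or both zero" survives integration whenever the
larger function is nonnegative and integrable, so integrating over time shows that the throughput
of `p` is strictly below `S`, contradicting feasibility.
-/

open MeasureTheory Real intervalIntegral Set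

def LtOrBothZero (x y : ℝ) : Prop := x < y ∨ x = 0 ∧ y = 0

namespace LtOrBothZero

theorem le {x y : ℝ} (h : LtOrBothZero x y) : x ≤ y := by
  rcases h with h | ⟨rfl, rfl⟩
  exacts [h.le, le_rfl]

theorem const_mul {x y c : ℝ} (h : LtOrBothZero x y) (hc : 0 < c) :
    LtOrBothZero (c * x) (c * y) := by
  rcases h with h | ⟨rfl, rfl⟩
  · exact .inl (mul_lt_mul_of_pos_left h hc)
  · exact .inr ⟨mul_zero c, mul_zero c⟩

theorem integral {α : Type*} [MeasurableSpace α] {ν : Measure α} {Q G : α → ℝ}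
    (hG : Integrable G ν) (hG_nonneg : 0 ≤ᵐ[ν] G) (h : ∀ᵐ t ∂ν, LtOrBothZero (Q t) (G t)) :
    LtOrBothZero (∫ t, Q t ∂ν) (∫ t, G t ∂ν) := by
  by_cases hQ : Integrable Q ν
  · have hQG : Q ≤ᵐ[ν] G := h.mono fun t ht => ht.le
    rcases (integral_mono_ae hQ hG hQG).lt_or_eq with hlt | heq
    · exact .inl hlt
    · have hG_zero : G =ᵐ[ν] 0 := by
        filter_upwards [h, (integral_eq_iff_of_ae_le hQ hG hQG).1 heq] with t ht hQGt
        rcases ht with ht | ⟨-, ht⟩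
        exacts [absurd hQGt ht.ne, ht]
      rw [integral_eq_zero_of_ae hG_zero] at heq ⊢
      exact .inr ⟨heq, rfl⟩
  · rw [integral_undef hQ]
    rcases (integral_nonneg_of_ae hG_nonneg).lt_or_eq with hpos | hzero
    exacts [.inl hpos, .inr ⟨rfl, hzero.symm⟩]

end LtOrBothZero

theorem log_one_add_mul_le_mul_log_one_add {p s : ℝ} (hs : 0 ≤ s) (hp : 1 ≤ p) :
    log (1 + p * s) ≤ p * log (1 + s) := by
  rw [← log_rpow (by linarith)]
  exact log_le_log (by nlinarith) (one_add_mul_self_le_rpow_one_add (by linarith) hp)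

section Rate

variable {Ω : Type*} [MeasurableSpace Ω] {μ : Measure Ω} {f : Ω → ℝ} {a b : ℝ}

theorem MeasureTheory.Integrable.log_one_add_mul_of_le (hf : ∀ ω, 0 ≤ f ω) (ha : 0 < a)
    (hab : a ≤ b)
    (hint : Integrable (fun ω => log (1 + a * f ω)) μ) :
    Integrable (fun ω => log (1 + b * f ω)) μ := by
  have hinv : (fun ω => log (1 + b * f ω)) =
      (fun y => log (1 + b / a * (exp y - 1))) ∘ fun ω => log (1 + a * f ω) := by
    funext ω
    have : 0 < 1 + a * f ω := by nlinarith [hf ω]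
    simp only [Function.comp, exp_log this, add_sub_cancel_left]
    field_simp
  have hmeas : AEStronglyMeasurable (fun ω => log (1 + b * f ω)) μ := by
    rw [hinv]
    exact ((by fun_prop : Measurable fun y => log (1 + b / a * (exp y - 1))).comp_aemeasurable
      hint.aemeasurable).aestronglyMeasurable
  refine (hint.const_mul (b / a)).mono' hmeas (ae_of_all _ fun ω => ?_)
  have hbf : 0 ≤ b * f ω := mul_nonneg (ha.le.trans hab) (hf ω)
  rw [norm_of_nonneg (log_nonneg (by linarith))]
  calc log (1 + b * f ω) = log (1 + b / a * (a * f ω)) := by field_simp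
    _ ≤ b / a * log (1 + a * f ω) :=
      log_one_add_mul_le_mul_log_one_add (mul_nonneg ha.le (hf ω)) ((one_le_div ha).2 hab)

theorem ltOrBothZero_integral_log_one_add_mul (hf : ∀ ω, 0 < f ω) (ha : 0 ≤ a) (hab : a < b) :
    LtOrBothZero (∫ ω, log (1 + a * f ω) ∂μ) (∫ ω, log (1 + b * f ω) ∂μ) := by
  by_cases hg : Integrable (fun ω => log (1 + b * f ω)) μ
  · refine LtOrBothZero.integral hg
      (ae_of_all _ fun ω => log_nonneg (by nlinarith [hf ω])) (ae_of_all _ fun ω => .inl ?_)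
    exact log_lt_log (by nlinarith [hf ω]) (by nlinarith [hf ω])
  · refine .inr ⟨?_, integral_undef hg⟩
    rcases ha.eq_or_lt with rfl | ha
    · simp
    · exact integral_undef fun hq => hg (hq.log_one_add_mul_of_le (fun ω => (hf ω).le) ha hab.le)

theorem ltOrBothZero_integral_mul_logb_one_add_mul {B : ℝ} (hB : 0 < B) (hf : ∀ ω, 0 < f ω)
    (ha : 0 ≤ a) (hab : a < b) :
    LtOrBothZero (∫ ω, B * logb 2 (1 + a * f ω) ∂μ) (∫ ω, B * logb 2 (1 + b * f ω) ∂μ) := by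
  have hlogb (c : ℝ) : ∫ ω, B * logb 2 (1 + c * f ω) ∂μ =
      B / log 2 * ∫ ω, log (1 + c * f ω) ∂μ := by
    rw [← MeasureTheory.integral_const_mul]
    simp only [logb, mul_div, div_mul_eq_mul_div]
  rw [hlogb, hlogb]
  exact (ltOrBothZero_integral_log_one_add_mul hf ha hab).const_mul
    (div_pos hB (log_pos one_lt_two))

end Rate

theorem P1_optimal_policy_general
    {Ω : Type*} [MeasurableSpace Ω] (μ : Measure Ω)
    (B δ2 S tk tk1 : ℝ) (hB : 0 < B) (hδ2 : 0 < δ2) (hS : 0 < S) (ht : tk < tk1)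
    (h : ℝ → Ω → ℝ) (M : ℝ → ℝ)
    (hh_pos : ∀ t ω, 0 < h t ω) (hM_pos : ∀ t, 0 < M t)
    -- throughput functional: expected rate under a power profile p
    (Thp : (ℝ → ℝ) → ℝ)
    (hThp : ∀ p : ℝ → ℝ,
      Thp p = ∫ t in tk..tk1, ∫ ω, B * Real.logb 2 (1 + p t * h t ω / δ2) ∂μ)
    (ϑstar : ℝ) (hϑstar_nonneg : 0 ≤ ϑstar)
    -- ϑ* solves the tight throughput equation with p(t) = ϑ*/M(t)
    (hϑstar_eq :
      (∫ t in tk..tk1,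
        ∫ ω, B * Real.logb 2 (1 + ϑstar * h t ω / (M t * δ2)) ∂μ) = S) :
    -- feasibility of the candidate optimal policy p*(t) = ϑ*/M(t)
    ((∀ t, 0 ≤ ϑstar / M t) ∧
      S ≤ Thp (fun t => ϑstar / M t) ∧
      (∀ t, t ∈ Set.Ico tk tk1 → (ϑstar / M t) * M t ≤ ϑstar)) ∧
    -- optimality: any feasible pair (p, ϑ) satisfies ϑ* ≤ ϑ
    (∀ (p : ℝ → ℝ) (ϑ : ℝ),
      (∀ t, 0 ≤ p t) →
      S ≤ Thp p →
      (∀ t, t ∈ Set.Ico tk tk1 → p t * M t ≤ ϑ) →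
      ϑstar ≤ ϑ) := by
  have hThp_Ioc (p : ℝ → ℝ) :
      Thp p = ∫ t in Ioc tk tk1, ∫ ω, B * logb 2 (1 + p t / δ2 * h t ω) ∂μ := by
    rw [hThp, integral_of_le ht.le]
    simp only [div_mul_eq_mul_div]
  have hThp_star : Thp (fun t => ϑstar / M t) = S := by
    rw [← hϑstar_eq, hThp]
    simp only [div_mul_eq_mul_div, div_div]
  refine ⟨⟨fun t => div_nonneg hϑstar_nonneg (hM_pos t).le, hThp_star.ge,
    fun t _ => (div_mul_cancel₀ _ (hM_pos t).ne').le⟩, ?_⟩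
  intro p ϑ hp hpS hpM
  by_contra! hlt
  have hpower_lt (t : ℝ) (htI : t ∈ Ioo tk tk1) : p t / δ2 < ϑstar / M t / δ2 := by
    gcongr
    rw [lt_div_iff₀ (hM_pos t)]
    exact (hpM t (Ioo_subset_Ico_self htI)).trans_lt hlt
  have hIoo : ∀ᵐ t ∂volume.restrict (Ioc tk tk1), t ∈ Ioo tk tk1 := by
    rw [← Measure.restrict_congr_set Ioo_ae_eq_Ioc]
    exact ae_restrict_mem measurableSet_Ioo
  rw [hThp_Ioc] at hThp_star hpS
  have hthroughput := LtOrBothZero.integral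
    (Integrable.of_integral_ne_zero (hThp_star.trans_ne hS.ne'))
    (ae_of_all _ fun t => integral_nonneg fun ω =>
      mul_nonneg hB.le (logb_nonneg one_lt_two (le_add_of_nonneg_right (mul_nonneg
        (div_nonneg (div_nonneg hϑstar_nonneg (hM_pos t).le) hδ2.le) (hh_pos t ω).le))))
    (hIoo.mono fun t htI => ltOrBothZero_integral_mul_logb_one_add_mul hB (hh_pos t)
      (div_nonneg (hp t) hδ2.le) (hpower_lt t htI))
  rw [hThp_star] at hthroughput
  rcases hthroughput with h_lt | ⟨-, h_zero⟩ <;> linarith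

/-- Optimal solution to the single-link worst-case-interference minimization problem P1:
the policy p*(t) = ϑ*/M(t) together with ϑ* (the unique solution of the tight throughput
equation) is feasible, and every feasible pair (p, ϑ) satisfies ϑ* ≤ ϑ. -/
theorem P1_optimal_policy
    {Ω : Type*} [MeasurableSpace Ω] (μ : Measure Ω) [IsProbabilityMeasure μ]
    (B δ2 S tk tk1 : ℝ) (hB : 0 < B) (hδ2 : 0 < δ2) (hS : 0 < S) (ht : tk < tk1)
    (h : ℝ → Ω → ℝ) (M : ℝ → ℝ)
    (hh_pos : ∀ t ω, 0 < h t ω) (hM_pos : ∀ t, 0 < M t)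
    -- throughput functional: expected rate under a power profile p
    (Thp : (ℝ → ℝ) → ℝ)
    (hThp : ∀ p : ℝ → ℝ,
      Thp p = ∫ t in tk..tk1, ∫ ω, B * Real.logb 2 (1 + p t * h t ω / δ2) ∂μ)
    (ϑstar : ℝ) (hϑstar_nonneg : 0 ≤ ϑstar)
    -- ϑ* solves the tight throughput equation with p(t) = ϑ*/M(t)
    (hϑstar_eq :
      (∫ t in tk..tk1,
        ∫ ω, B * Real.logb 2 (1 + ϑstar * h t ω / (M t * δ2)) ∂μ) = S) :
    -- feasibility of the candidate optimal policy p*(t) = ϑ*/M(t)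
    ((∀ t, 0 ≤ ϑstar / M t) ∧
      S ≤ Thp (fun t => ϑstar / M t) ∧
      (∀ t, t ∈ Set.Ico tk tk1 → (ϑstar / M t) * M t ≤ ϑstar)) ∧
    -- optimality: any feasible pair (p, ϑ) satisfies ϑ* ≤ ϑ
    (∀ (p : ℝ → ℝ) (ϑ : ℝ),
      (∀ t, 0 ≤ p t) →
      S ≤ Thp p →
      (∀ t, t ∈ Set.Ico tk tk1 → p t * M t ≤ ϑ) →
      ϑstar ≤ ϑ) :=
  P1_optimal_policy_general μ B δ2 S tk tk1 hB hδ2 hS ht h M hh_pos hM_pos Thp hThp ϑstar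
    hϑstar_nonneg hϑstar_eq
end

section
/- With the edge weight w(t_k, t_{k+1}) defined implicitly by ∫_{t_k}^{t_{k+1}} c(ϑ, t) dt = S for a positive, strictly-increasing-in-ϑ capacity density c, define recursively t₁(ϑ) = 0 and t_{k+1}(ϑ) as the unique solution of ∫_{t_k(ϑ)}^{t_{k+1}(ϑ)} c(ϑ, t) dt = S for k = 1, …, M−1. Then for every k ∈ {2, …, M}, the map ϑ ↦ t_k(ϑ) is strictly decreasing. -/
open MeasureTheory Real intervalIntegral

lemma key_step (c1 c2 : ℝ → ℝ) (S : ℝ)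
    (hlt : ∀ t, c1 t < c2 t) (hpos : ∀ t, 0 < c2 t)
    (hint1 : ∀ a b : ℝ, IntervalIntegrable c1 MeasureTheory.volume a b)
    (hint2 : ∀ a b : ℝ, IntervalIntegrable c2 MeasureTheory.volume a b)
    (a1 b1 a2 b2 : ℝ) (ha : a2 ≤ a1) (h1 : a1 < b1)
    (e1 : (∫ t in a1..b1, c1 t) = S) (e2 : (∫ t in a2..b2, c2 t) = S) :
    b2 < b1 := by
  by_contra h
  push_neg at h
  have hsplit : (∫ t in a2..a1, c2 t) + (∫ t in a1..b1, c2 t) + (∫ t in b1..b2, c2 t)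
      = ∫ t in a2..b2, c2 t := by
    rw [integral_add_adjacent_intervals (hint2 a2 a1) (hint2 a1 b1),
      integral_add_adjacent_intervals (hint2 a2 b1) (hint2 b1 b2)]
  have s1 : 0 ≤ ∫ t in a2..a1, c2 t :=
    intervalIntegral.integral_nonneg ha (fun x _ => (hpos x).le)
  have s3 : 0 ≤ ∫ t in b1..b2, c2 t :=
    intervalIntegral.integral_nonneg h (fun x _ => (hpos x).le)
  have s2 : (∫ t in a1..b1, c1 t) < ∫ t in a1..b1, c2 t := by
    have hp := intervalIntegral.intervalIntegral_pos_of_pos (f := fun t => c2 t - c1 t)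
      ((hint2 a1 b1).sub (hint1 a1 b1)) (fun t => sub_pos.2 (hlt t)) h1
    rw [intervalIntegral.integral_sub (hint2 a1 b1) (hint1 a1 b1)] at hp
    linarith
  linarith

/-- Monotonicity of the recursively defined time boundaries: with t₁(ϑ) = 0 and
t_{k+1}(ϑ) the solution of ∫_{t_k(ϑ)}^{t_{k+1}(ϑ)} c(ϑ,t) dt = S, each map
ϑ ↦ t_k(ϑ) (k = 2,…,M) is strictly decreasing on (0,∞). -/
theorem time_boundaries_strictAnti
    (M : ℕ) (hM : 2 ≤ M) (S : ℝ) (hS : 0 < S)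
    (c : ℝ → ℝ → ℝ)
    (hc_cont : ∀ t, Continuous (fun ϑ => c ϑ t))
    (hc_mono : ∀ t, StrictMono (fun ϑ => c ϑ t))
    (hc_zero : ∀ t, c 0 t = 0)
    (hc_pos : ∀ ϑ t, 0 < ϑ → 0 < c ϑ t)
    (hc_int : ∀ ϑ a b, IntervalIntegrable (c ϑ) MeasureTheory.volume a b)
    (tb : ℝ → ℕ → ℝ)
    (h_init : ∀ ϑ, 0 < ϑ → tb ϑ 1 = 0)
    (h_rec : ∀ ϑ k, 0 < ϑ → 1 ≤ k → k ≤ M - 1 →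
      tb ϑ k < tb ϑ (k + 1) ∧ (∫ t in (tb ϑ k)..(tb ϑ (k + 1)), c ϑ t) = S) :
    ∀ k, 2 ≤ k → k ≤ M → ∀ ϑ1 ϑ2 : ℝ, 0 < ϑ1 → ϑ1 < ϑ2 →
      tb ϑ2 k < tb ϑ1 k := by
  intro k hk2
  induction k, hk2 using Nat.le_induction with
  | base =>
    intro hkM ϑ1 ϑ2 h1 h12
    have h2 : (0:ℝ) < ϑ2 := h1.trans h12
    have hr1 := h_rec ϑ1 1 h1 le_rfl (by omega)
    have hr2 := h_rec ϑ2 1 h2 le_rfl (by omega)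
    rw [h_init ϑ1 h1] at hr1
    rw [h_init ϑ2 h2] at hr2
    exact key_step (c ϑ1) (c ϑ2) S (fun t => hc_mono t h12) (fun t => hc_pos ϑ2 t h2)
      (hc_int ϑ1) (hc_int ϑ2) 0 (tb ϑ1 2) 0 (tb ϑ2 2) le_rfl hr1.1 hr1.2 hr2.2
  | succ k hk ih =>
    intro hkM ϑ1 ϑ2 h1 h12
    have h2 : (0:ℝ) < ϑ2 := h1.trans h12
    have hr1 := h_rec ϑ1 k h1 (by omega) (by omega)
    have hr2 := h_rec ϑ2 k h2 (by omega) (by omega)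
    have hIH := ih (by omega) ϑ1 ϑ2 h1 h12
    exact key_step (c ϑ1) (c ϑ2) S (fun t => hc_mono t h12) (fun t => hc_pos ϑ2 t h2)
      (hc_int ϑ1) (hc_int ϑ2) (tb ϑ1 k) (tb ϑ1 (k+1)) (tb ϑ2 k) (tb ϑ2 (k+1))
      hIH.le hr1.1 hr1.2 hr2.2
end

section
/- In the setting of the recursively defined time boundaries t_k(ϑ) (t₁ = 0, ∫_{t_k}^{t_{k+1}} c(ϑ,t)dt = S for each k), if ϑ₁ < ϑ₂ and t_k(ϑ₁) > t_k(ϑ₂), then t_{k+1}(ϑ₁) > t_{k+1}(ϑ₂) (the induction step of the monotonicity of t_M). -/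
open MeasureTheory Real intervalIntegral

/-- Induction step in the monotonicity of the time boundaries: if ϑ₁ < ϑ₂,
t_k(ϑ₁) > t_k(ϑ₂), and both intervals satisfy the defining throughput equation
∫_{t_k}^{t_{k+1}} c(ϑ, t) dt = S, then t_{k+1}(ϑ₁) > t_{k+1}(ϑ₂). -/
theorem time_boundary_induction_step
    (S : ℝ) (hS : 0 < S)
    (c : ℝ → ℝ → ℝ)
    (hc_cont : ∀ t, Continuous (fun ϑ => c ϑ t))
    (hc_mono : ∀ t, StrictMono (fun ϑ => c ϑ t))
    (hc_zero : ∀ t, c 0 t = 0)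
    (hc_pos : ∀ ϑ t, 0 < ϑ → 0 < c ϑ t)
    (hc_int : ∀ ϑ a b, IntervalIntegrable (c ϑ) MeasureTheory.volume a b)
    (ϑ1 ϑ2 a1 b1 a2 b2 : ℝ)
    (hϑ1 : 0 < ϑ1) (hϑ12 : ϑ1 < ϑ2)
    (ha : a2 < a1) (hab1 : a1 < b1) (hab2 : a2 < b2)
    (heq1 : (∫ t in a1..b1, c ϑ1 t) = S)
    (heq2 : (∫ t in a2..b2, c ϑ2 t) = S) :
    b2 < b1 := by
  by_contra h
  push_neg at h
  have hϑ2 : 0 < ϑ2 := hϑ1.trans hϑ12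
  have hsplit1 : (∫ t in a2..a1, c ϑ2 t) + (∫ t in a1..b2, c ϑ2 t)
      = ∫ t in a2..b2, c ϑ2 t :=
    intervalIntegral.integral_add_adjacent_intervals (hc_int _ _ _) (hc_int _ _ _)
  have hsplit2 : (∫ t in a1..b1, c ϑ2 t) + (∫ t in b1..b2, c ϑ2 t)
      = ∫ t in a1..b2, c ϑ2 t :=
    intervalIntegral.integral_add_adjacent_intervals (hc_int _ _ _) (hc_int _ _ _)
  have hpos1 : 0 < ∫ t in a2..a1, c ϑ2 t :=
    intervalIntegral.intervalIntegral_pos_of_pos_on (hc_int _ _ _)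
      (fun x _ => hc_pos _ _ hϑ2) ha
  have hmid : S ≤ ∫ t in a1..b1, c ϑ2 t := by
    rw [← heq1]
    exact intervalIntegral.integral_mono_on hab1.le (hc_int _ _ _) (hc_int _ _ _)
      (fun x _ => (hc_mono x hϑ12).le)
  have hnn : 0 ≤ ∫ t in b1..b2, c ϑ2 t :=
    intervalIntegral.integral_nonneg h (fun x _ => (hc_pos _ _ hϑ2).le)
  have : S < S := by
    calc S < (∫ t in a2..a1, c ϑ2 t) + ((∫ t in a1..b1, c ϑ2 t) + (∫ t in b1..b2, c ϑ2 t)) := by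
            linarith
      _ = ∫ t in a2..b2, c ϑ2 t := by rw [hsplit2, hsplit1]
      _ = S := heq2
  exact lt_irrefl _ this
end

section
/- Fix a route o(1), …, o(M) and per-edge weights w_k(t_k, t_{k+1}) each strictly increasing in t_k and strictly decreasing in t_{k+1} (for t_k < t_{k+1}), continuous, with boundary conditions t₁ = 0, t_M = T fixed. A feasible pair (t*, ϑ*) with w_k(t*_k, t*_{k+1}) ≤ ϑ* for all k minimizes ϑ over all feasible time boundaries 0 = t₁ ≤ ⋯ ≤ t_M = T if and only if w_k(t*_k, t*_{k+1}) = ϑ* for every k ∈ {1, …, M−1}. -/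
open Set

/-- Strict chain monotonicity for the boundaries. -/
lemma chain_strict (M : ℕ) (t : ℕ → ℝ)
    (h : ∀ k, 1 ≤ k → k < M → t k < t (k + 1)) :
    ∀ i j, 1 ≤ i → i < j → j ≤ M → t i < t j := by
  intro i j h1 hij hjM
  induction j with
  | zero => omega
  | succ n ih =>
    rcases Nat.lt_or_ge i n with h' | h'
    · exact lt_trans (ih (by omega) (by omega)) (h n (by omega) (by omega))
    · have : i = n := by omega
      subst this
      exact h i h1 (by omega)

lemma chain_le (M : ℕ) (t : ℕ → ℝ)
    (h : ∀ k, 1 ≤ k → k < M → t k < t (k + 1)) :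
    ∀ i j, 1 ≤ i → i ≤ j → j ≤ M → t i ≤ t j := by
  intro i j h1 hij hjM
  rcases eq_or_lt_of_le hij with rfl | hlt
  · exact le_refl _
  · exact (chain_strict M t h i j h1 hlt hjM).le

/-- Continuity in the first argument: the weight stays below `ϑ` after
slightly increasing the start time. -/
lemma cont_start (T : ℝ) (w : ℕ → ℝ → ℝ → ℝ)
    (hw_cont : ∀ k, ContinuousOn (fun p : ℝ × ℝ => w k p.1 p.2)
      {p : ℝ × ℝ | 0 ≤ p.1 ∧ p.1 < p.2 ∧ p.2 ≤ T})
    (k : ℕ) (a b ϑ : ℝ) (ha : 0 ≤ a) (hab : a < b) (hbT : b ≤ T)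
    (h : w k a b < ϑ) : ∃ x, a < x ∧ x < b ∧ w k x b < ϑ := by
  have hmem : (a, b) ∈ {p : ℝ × ℝ | 0 ≤ p.1 ∧ p.1 < p.2 ∧ p.2 ≤ T} :=
    ⟨ha, hab, hbT⟩
  have hmaps : MapsTo (fun x : ℝ => (x, b)) (Ioo a b)
      {p : ℝ × ℝ | 0 ≤ p.1 ∧ p.1 < p.2 ∧ p.2 ≤ T} := by
    intro x hx
    exact ⟨le_trans ha hx.1.le, hx.2, hbT⟩
  have hc : ContinuousWithinAt (fun x : ℝ => w k x b) (Ioo a b) a := by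
    have h1 : ContinuousWithinAt (fun x : ℝ => (x, b)) (Ioo a b) a :=
      Continuous.continuousWithinAt (by fun_prop)
    exact ContinuousWithinAt.comp (g := fun p : ℝ × ℝ => w k p.1 p.2)
      (f := fun x : ℝ => (x, b)) ((hw_cont k).continuousWithinAt hmem) h1 hmaps
  have hev : ∀ᶠ x in nhdsWithin a (Ioo a b), w k x b < ϑ :=
    hc.eventually (eventually_lt_nhds h)
  have hne : (nhdsWithin a (Ioo a b)).NeBot := by
    rw [nhdsWithin_Ioo_eq_nhdsGT hab]; infer_instance
  obtain ⟨x, hxw, hx⟩ := (hev.and eventually_mem_nhdsWithin).exists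
  exact ⟨x, hx.1, hx.2, hxw⟩

/-- Continuity in the second argument: the weight stays below `ϑ` after
slightly decreasing the end time. -/
lemma cont_end (T : ℝ) (w : ℕ → ℝ → ℝ → ℝ)
    (hw_cont : ∀ k, ContinuousOn (fun p : ℝ × ℝ => w k p.1 p.2)
      {p : ℝ × ℝ | 0 ≤ p.1 ∧ p.1 < p.2 ∧ p.2 ≤ T})
    (k : ℕ) (a b ϑ : ℝ) (ha : 0 ≤ a) (hab : a < b) (hbT : b ≤ T)
    (h : w k a b < ϑ) : ∃ y, a < y ∧ y < b ∧ w k a y < ϑ := by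
  have hmem : (a, b) ∈ {p : ℝ × ℝ | 0 ≤ p.1 ∧ p.1 < p.2 ∧ p.2 ≤ T} :=
    ⟨ha, hab, hbT⟩
  have hmaps : MapsTo (fun y : ℝ => (a, y)) (Ioo a b)
      {p : ℝ × ℝ | 0 ≤ p.1 ∧ p.1 < p.2 ∧ p.2 ≤ T} := by
    intro y hy
    exact ⟨ha, hy.1, le_trans hy.2.le hbT⟩
  have hc : ContinuousWithinAt (fun y : ℝ => w k a y) (Ioo a b) b := by
    have h1 : ContinuousWithinAt (fun y : ℝ => (a, y)) (Ioo a b) b :=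
      Continuous.continuousWithinAt (by fun_prop)
    exact ContinuousWithinAt.comp (g := fun p : ℝ × ℝ => w k p.1 p.2)
      (f := fun y : ℝ => (a, y)) ((hw_cont k).continuousWithinAt hmem) h1 hmaps
  have hev : ∀ᶠ y in nhdsWithin b (Ioo a b), w k a y < ϑ :=
    hc.eventually (eventually_lt_nhds h)
  have hne : (nhdsWithin b (Ioo a b)).NeBot := by
    rw [nhdsWithin_Ioo_eq_nhdsLT hab]; infer_instance
  obtain ⟨y, hyw, hy⟩ := (hev.and eventually_mem_nhdsWithin).exists
  exact ⟨y, hy.1, hy.2, hyw⟩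

/-- Proposition 2 (optimality condition for P2 on a fixed route): with per-edge
weights w_k strictly increasing in the start time, strictly decreasing in the end
time, continuous, and blowing up as the interval shrinks, a feasible pair (t*, ϑ*)
minimizes the bottleneck value ϑ over all time boundaries 0 = t₁ < ⋯ < t_M = T
if and only if w_k(t*_k, t*_{k+1}) = ϑ* for every k ∈ {1,…,M−1}. -/
theorem P2_optimality_condition
    (M : ℕ) (hM : 2 ≤ M) (T : ℝ) (hT : 0 < T)
    (w : ℕ → ℝ → ℝ → ℝ)
    (hw_nonneg : ∀ k a b, 0 ≤ w k a b)
    (hw_mono : ∀ k b, StrictMonoOn (fun a => w k a b) (Set.Ico 0 b))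
    (hw_anti : ∀ k a, StrictAntiOn (fun b => w k a b) (Set.Ioc a T))
    (hw_cont : ∀ k, ContinuousOn (fun p : ℝ × ℝ => w k p.1 p.2)
      {p : ℝ × ℝ | 0 ≤ p.1 ∧ p.1 < p.2 ∧ p.2 ≤ T})
    (hw_blowup : ∀ k a C, ∃ δ > 0, ∀ b, a < b → b < a + δ → C ≤ w k a b)
    -- feasibility predicate for time boundaries (t : index 1..M) and level ϑ
    (Feasible : (ℕ → ℝ) → ℝ → Prop)
    (hFeasible : ∀ t ϑ, Feasible t ϑ ↔
      (t 1 = 0 ∧ t M = T ∧ (∀ k, 1 ≤ k → k < M → t k < t (k + 1)) ∧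
        ∀ k, 1 ≤ k → k < M → w k (t k) (t (k + 1)) ≤ ϑ))
    (tstar : ℕ → ℝ) (ϑstar : ℝ) (hfeas : Feasible tstar ϑstar) :
    (∀ t ϑ, Feasible t ϑ → ϑstar ≤ ϑ) ↔
      (∀ k, 1 ≤ k → k < M → w k (tstar k) (tstar (k + 1)) = ϑstar) := by
  rw [hFeasible] at hfeas
  obtain ⟨ht1, htM, hinc, hwle⟩ := hfeas
  -- basic bounds on tstar
  have hpos : ∀ k, 1 ≤ k → k ≤ M → 0 ≤ tstar k := by
    intro k hk1 hkM
    rw [← ht1]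
    exact chain_le M tstar hinc 1 k le_rfl hk1 hkM
  have hleT : ∀ k, 1 ≤ k → k ≤ M → tstar k ≤ T := by
    intro k hk1 hkM
    rw [← htM]
    exact chain_le M tstar hinc k M hk1 hkM le_rfl
  constructor
  · -- optimality → all weights equal ϑstar
    intro hopt k0 hk01 hk0M
    by_contra hne
    have hlt : w k0 (tstar k0) (tstar (k0 + 1)) < ϑstar :=
      lt_of_le_of_ne (hwle k0 hk01 hk0M) hne
    -- Step 1: propagate slack leftwards from k0 down to 1.
    have left : ∀ d : ℕ, ∃ t : ℕ → ℝ,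
        t 1 = 0 ∧ t M = T ∧ (∀ k, 1 ≤ k → k < M → t k < t (k + 1)) ∧
        (∀ j, 1 ≤ j → j < M → w j (t j) (t (j + 1)) ≤ ϑstar) ∧
        (∀ j, k0 - d ≤ j → j ≤ k0 → 1 ≤ j → w j (t j) (t (j + 1)) < ϑstar) := by
      intro d
      induction d with
      | zero =>
        refine ⟨tstar, ht1, htM, hinc, hwle, ?_⟩
        intro j hj1 hj2 _
        have : j = k0 := by omega
        subst this
        exact hlt
      | succ d ih =>
        obtain ⟨t, h1, h2, h3, h4, h5⟩ := ih
        by_cases hcase : k0 - d ≤ 1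
        · exact ⟨t, h1, h2, h3, h4, fun j hj1 hj2 hj3 => h5 j (by omega) hj2 hj3⟩
        · -- n := k0 - d ≥ 2; move boundary n to the right
          set n := k0 - d with hn
          have hn2 : 2 ≤ n := by omega
          have hnk0 : n ≤ k0 := by omega
          have hnM : n < M := by omega
          have hpos' : ∀ k, 1 ≤ k → k ≤ M → 0 ≤ t k := by
            intro k hk1 hkM
            rw [← h1]; exact chain_le M t h3 1 k le_rfl hk1 hkM
          have hleT' : ∀ k, 1 ≤ k → k ≤ M → t k ≤ T := by
            intro k hk1 hkM
            rw [← h2]; exact chain_le M t h3 k M hk1 hkM le_rfl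
          have hslackn : w n (t n) (t (n + 1)) < ϑstar := h5 n le_rfl hnk0 (by omega)
          obtain ⟨x, hx1, hx2, hx3⟩ :=
            cont_start T w hw_cont n (t n) (t (n + 1)) ϑstar
              (hpos' n (by omega) (by omega)) (h3 n (by omega) hnM)
              (hleT' (n + 1) (by omega) (by omega)) hslackn
          refine ⟨fun j => if j = n then x else t j, ?_, ?_, ?_, ?_, ?_⟩
          · simp only [if_neg (by omega : (1 : ℕ) ≠ n)]; exact h1
          · simp only [if_neg (by omega : M ≠ n)]; exact h2
          · intro k hk1 hkM
            by_cases hkn : k = n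
            · simp only [if_pos hkn, if_neg (show k + 1 ≠ n by omega)]
              rw [hkn]
              exact hx2
            · by_cases hkn' : k + 1 = n
              · simp only [if_neg hkn, if_pos hkn']
                have : t k < t (k + 1) := h3 k hk1 hkM
                rw [hkn'] at this
                exact lt_trans this hx1
              · simp only [if_neg hkn, if_neg hkn']
                exact h3 k hk1 hkM
          · intro j hj1 hjM
            by_cases hjn : j = n
            · simp only [if_pos hjn, if_neg (show j + 1 ≠ n by omega)]
              rw [hjn]
              exact hx3.le
            · by_cases hjn' : j + 1 = n
              · -- hop j = n - 1: end time increased from t n to x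
                simp only [if_neg hjn, if_pos hjn']
                have hend : w j (t j) x ≤ w j (t j) (t n) := by
                  have hm := hw_anti j (t j)
                  have htn : t n ∈ Ioc (t j) T := by
                    constructor
                    · rw [← hjn']; exact h3 j hj1 hjM
                    · exact hleT' n (by omega) (by omega)
                  have hxmem : x ∈ Ioc (t j) T := by
                    constructor
                    · calc t j < t n := htn.1
                        _ < x := hx1
                    · exact le_trans hx2.le (hleT' (n + 1) (by omega) (by omega))
                  exact (hm htn hxmem hx1).le
                calc w j (t j) x ≤ w j (t j) (t n) := hend
                  _ = w j (t j) (t (j + 1)) := by rw [hjn']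
                  _ ≤ ϑstar := h4 j hj1 hjM
              · simp only [if_neg hjn, if_neg hjn']
                exact h4 j hj1 hjM
          · intro j hj1 hj2 hj3
            by_cases hjn : j = n
            · simp only [if_pos hjn, if_neg (show j + 1 ≠ n by omega)]
              rw [hjn]
              exact hx3
            · by_cases hjn' : j + 1 = n
              · -- hop n - 1: strictly decreased
                simp only [if_neg hjn, if_pos hjn']
                have hm := hw_anti j (t j)
                have htn : t n ∈ Ioc (t j) T := by
                  constructor
                  · rw [← hjn']; exact h3 j hj3 (by omega)
                  · exact hleT' n (by omega) (by omega)
                have hxmem : x ∈ Ioc (t j) T := by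
                  constructor
                  · exact lt_trans htn.1 hx1
                  · exact le_trans hx2.le (hleT' (n + 1) (by omega) (by omega))
                have : w j (t j) x < w j (t j) (t n) := hm htn hxmem hx1
                calc w j (t j) x < w j (t j) (t n) := this
                  _ = w j (t j) (t (j + 1)) := by rw [hjn']
                  _ ≤ ϑstar := h4 j hj3 (by omega)
              · simp only [if_neg hjn, if_neg hjn']
                exact h5 j (by omega) hj2 hj3
    obtain ⟨t1, g1, g2, g3, g4, g5⟩ := left k0
    have g5' : ∀ j, 1 ≤ j → j ≤ k0 → w j (t1 j) (t1 (j + 1)) < ϑstar := by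
      intro j hj1 hj2
      exact g5 j (by omega) hj2 hj1
    -- Step 2: propagate slack rightwards from k0 up to M - 1.
    have right : ∀ d : ℕ, ∃ t : ℕ → ℝ,
        t 1 = 0 ∧ t M = T ∧ (∀ k, 1 ≤ k → k < M → t k < t (k + 1)) ∧
        (∀ j, 1 ≤ j → j < M → w j (t j) (t (j + 1)) ≤ ϑstar) ∧
        (∀ j, 1 ≤ j → j ≤ k0 + d → j < M → w j (t j) (t (j + 1)) < ϑstar) := by
      intro d
      induction d with
      | zero =>
        exact ⟨t1, g1, g2, g3, g4, fun j hj1 hj2 _ => g5' j hj1 hj2⟩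
      | succ d ih =>
        obtain ⟨t, h1, h2, h3, h4, h5⟩ := ih
        by_cases hcase : M ≤ k0 + d + 1
        · exact ⟨t, h1, h2, h3, h4, fun j hj1 hj2 hj3 => h5 j hj1 (by omega) hj3⟩
        · -- n := k0 + d, hop n+1 exists (n+1 < M); move boundary n+1 left
          set n := k0 + d with hn
          have hn1 : 1 ≤ n := by omega
          have hnM : n + 1 < M := by omega
          have hpos' : ∀ k, 1 ≤ k → k ≤ M → 0 ≤ t k := by
            intro k hk1 hkM
            rw [← h1]; exact chain_le M t h3 1 k le_rfl hk1 hkM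
          have hleT' : ∀ k, 1 ≤ k → k ≤ M → t k ≤ T := by
            intro k hk1 hkM
            rw [← h2]; exact chain_le M t h3 k M hk1 hkM le_rfl
          have hslackn : w n (t n) (t (n + 1)) < ϑstar := h5 n hn1 le_rfl (by omega)
          obtain ⟨y, hy1, hy2, hy3⟩ :=
            cont_end T w hw_cont n (t n) (t (n + 1)) ϑstar
              (hpos' n hn1 (by omega)) (h3 n hn1 (by omega))
              (hleT' (n + 1) (by omega) (by omega)) hslackn
          refine ⟨fun j => if j = n + 1 then y else t j, ?_, ?_, ?_, ?_, ?_⟩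
          · simp only [if_neg (by omega : (1 : ℕ) ≠ n + 1)]; exact h1
          · simp only [if_neg (by omega : M ≠ n + 1)]; exact h2
          · intro k hk1 hkM
            by_cases hkn : k = n + 1
            · simp only [if_pos hkn, if_neg (show k + 1 ≠ n + 1 by omega)]
              rw [hkn]
              have : t (n + 1) < t (n + 1 + 1) := h3 (n + 1) (by omega) (by omega)
              exact lt_trans hy2 this
            · by_cases hkn' : k + 1 = n + 1
              · have : k = n := by omega
                subst this
                simp only [if_neg hkn, if_pos rfl]
                exact hy1
              · simp only [if_neg hkn, if_neg hkn']
                exact h3 k hk1 hkM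
          · intro j hj1 hjM
            by_cases hjn : j = n + 1
            · simp only [if_pos hjn, if_neg (show j + 1 ≠ n + 1 by omega)]
              rw [hjn]
              -- hop n+1: start decreased from t (n+1) to y: weight decreases
              have hm := hw_mono (n + 1) (t (n + 1 + 1))
              have hmem1 : t (n + 1) ∈ Ico (0 : ℝ) (t (n + 1 + 1)) := by
                constructor
                · exact hpos' (n + 1) (by omega) (by omega)
                · exact h3 (n + 1) (by omega) (by omega)
              have hmem2 : y ∈ Ico (0 : ℝ) (t (n + 1 + 1)) := by
                constructor
                · exact le_trans (hpos' n hn1 (by omega)) hy1.le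
                · exact lt_trans hy2 hmem1.2
              have hlt2 : w (n + 1) y (t (n + 1 + 1)) <
                  w (n + 1) (t (n + 1)) (t (n + 1 + 1)) := hm hmem2 hmem1 hy2
              exact le_trans hlt2.le (h4 (n + 1) (by omega) (by omega))
            · by_cases hjn' : j + 1 = n + 1
              · have : j = n := by omega
                subst this
                simp only [if_neg hjn, if_pos rfl]
                exact hy3.le
              · simp only [if_neg hjn, if_neg hjn']
                exact h4 j hj1 hjM
          · intro j hj1 hj2 hj3
            by_cases hjn : j = n + 1
            · simp only [if_pos hjn, if_neg (show j + 1 ≠ n + 1 by omega)]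
              rw [hjn]
              have hm := hw_mono (n + 1) (t (n + 1 + 1))
              have hmem1 : t (n + 1) ∈ Ico (0 : ℝ) (t (n + 1 + 1)) := by
                constructor
                · exact hpos' (n + 1) (by omega) (by omega)
                · exact h3 (n + 1) (by omega) (by omega)
              have hmem2 : y ∈ Ico (0 : ℝ) (t (n + 1 + 1)) := by
                constructor
                · exact le_trans (hpos' n hn1 (by omega)) hy1.le
                · exact lt_trans hy2 hmem1.2
              have hlt2 : w (n + 1) y (t (n + 1 + 1)) <
                  w (n + 1) (t (n + 1)) (t (n + 1 + 1)) := hm hmem2 hmem1 hy2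
              exact lt_of_lt_of_le hlt2 (h4 (n + 1) (by omega) (by omega))
            · by_cases hjn' : j + 1 = n + 1
              · have : j = n := by omega
                subst this
                simp only [if_neg hjn, if_pos rfl]
                exact hy3
              · simp only [if_neg hjn, if_neg hjn']
                exact h5 j hj1 (by omega) hj3
    obtain ⟨t2, f1, f2, f3, f4, f5⟩ := right (M - 1 - k0)
    have f5' : ∀ j, 1 ≤ j → j < M → w j (t2 j) (t2 (j + 1)) < ϑstar := by
      intro j hj1 hj2
      exact f5 j hj1 (by omega) hj2
    -- build a strictly better feasible level
    have hne' : (Finset.Icc 1 (M - 1)).Nonempty := by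
      refine ⟨1, ?_⟩
      simp only [Finset.mem_Icc]
      omega
    set ϑ := (Finset.Icc 1 (M - 1)).sup' hne' (fun j => w j (t2 j) (t2 (j + 1)))
      with hϑ
    have hϑlt : ϑ < ϑstar := by
      rw [hϑ, Finset.sup'_lt_iff]
      intro j hj
      simp only [Finset.mem_Icc] at hj
      exact f5' j hj.1 (by omega)
    have hfeas2 : Feasible t2 ϑ := by
      rw [hFeasible]
      refine ⟨f1, f2, f3, ?_⟩
      intro k hk1 hkM
      exact Finset.le_sup' (f := fun j => w j (t2 j) (t2 (j + 1)))
        (by simp only [Finset.mem_Icc]; omega)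
    exact absurd (hopt t2 ϑ hfeas2) (not_le.mpr hϑlt)
  · -- all weights equal ϑstar → optimality
    intro hall t ϑ hf
    rw [hFeasible] at hf
    obtain ⟨h1, h2, h3, h4⟩ := hf
    by_contra hlt
    push_neg at hlt
    -- claim: tstar k ≤ t k for all k, strict for k ≥ 2
    have hpos' : ∀ k, 1 ≤ k → k ≤ M → 0 ≤ t k := by
      intro k hk1 hkM
      rw [← h1]; exact chain_le M t h3 1 k le_rfl hk1 hkM
    have hleT' : ∀ k, 1 ≤ k → k ≤ M → t k ≤ T := by
      intro k hk1 hkM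
      rw [← h2]; exact chain_le M t h3 k M hk1 hkM le_rfl
    have key : ∀ k, 1 ≤ k → k ≤ M → tstar k ≤ t k ∧ (2 ≤ k → tstar k < t k) := by
      intro k hk1 hkM
      induction k with
      | zero => omega
      | succ n ih =>
        by_cases hn0 : n = 0
        · subst hn0
          constructor
          · rw [ht1, h1]
          · omega
        · have hn1 : 1 ≤ n := by omega
          have hnM : n < M := by omega
          obtain ⟨ihle, _⟩ := ih hn1 (by omega)
          have hkey : tstar (n + 1) < t (n + 1) := by
            -- w n (t n) (t (n+1)) ≤ ϑ < ϑstar = w n (tstar n) (tstar (n+1))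
            have hA : w n (t n) (t (n + 1)) < w n (tstar n) (tstar (n + 1)) := by
              calc w n (t n) (t (n + 1)) ≤ ϑ := h4 n hn1 hnM
                _ < ϑstar := hlt
                _ = w n (tstar n) (tstar (n + 1)) := (hall n hn1 hnM).symm
            have hB : w n (tstar n) (t (n + 1)) ≤ w n (t n) (t (n + 1)) := by
              have hm := (hw_mono n (t (n + 1))).monotoneOn
              have hmem1 : tstar n ∈ Ico (0 : ℝ) (t (n + 1)) := by
                constructor
                · exact hpos n hn1 (by omega)
                · exact lt_of_le_of_lt ihle (h3 n hn1 hnM)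
              have hmem2 : t n ∈ Ico (0 : ℝ) (t (n + 1)) := by
                constructor
                · exact hpos' n hn1 (by omega)
                · exact h3 n hn1 hnM
              exact hm hmem1 hmem2 ihle
            have hC : w n (tstar n) (t (n + 1)) < w n (tstar n) (tstar (n + 1)) :=
              lt_of_le_of_lt hB hA
            have hm := hw_anti n (tstar n)
            have hmem1 : t (n + 1) ∈ Ioc (tstar n) T := by
              constructor
              · exact lt_of_le_of_lt ihle (h3 n hn1 hnM)
              · exact hleT' (n + 1) (by omega) (by omega)
            have hmem2 : tstar (n + 1) ∈ Ioc (tstar n) T := by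
              constructor
              · exact hinc n hn1 hnM
              · exact hleT (n + 1) (by omega) (by omega)
            by_contra hcon
            push_neg at hcon
            rcases eq_or_lt_of_le hcon with heq | hlt'
            · rw [heq] at hC; exact lt_irrefl _ hC
            · exact absurd (hm hmem1 hmem2 hlt') (not_lt.mpr hC.le)
          exact ⟨hkey.le, fun _ => hkey⟩
    have := (key M (by omega) le_rfl).2 hM
    rw [htM, h2] at this
    exact lt_irrefl _ this
end
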